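/- arXiv:2206.03023 — 4 statements merged into one kernel-verified Lean document; each statement's English description precedes it below -/
import Mathlib

section
/- Let X be a finite set, q a strictly positive probability distribution on X, f convex with f(1) = 0, and y : X → ℝ. Then sup over probability distributions p on X of [∑_x p(x) y(x) - D_f(p‖q)] ≤ ∑_x q(x) f⋆(y(x)), where D_f(p‖q) = ∑_x q(x) f(p(x)/q(x)) and f⋆(t) = sup_{s ≥ 0}(st - f(s)) is the conjugate over nonnegative reals. -/
open Finset

theorem sub_perspective_le_mul_of_mem_upperBounds {f : ℝ → ℝ} {t c p q : ℝ}
    (hc : c ∈ upperBounds {v : ℝ | ∃ s : ℝ, 0 ≤ s ∧ v = s * t - f s})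
    (hq : 0 < q) (hp : 0 ≤ p) :
    p * t - q * f (p / q) ≤ q * c := by
  have hpq : p / q * t - f (p / q) ≤ c := hc ⟨p / q, div_nonneg hp hq.le, rfl⟩
  calc p * t - q * f (p / q) = q * (p / q * t - f (p / q)) := by field_simp
    _ ≤ q * c := mul_le_mul_of_nonneg_left hpq hq.le

theorem stmt_7_general {X : Type*} [Fintype X] (q : X → ℝ)
    (hq_pos : ∀ x, 0 < q x)
    (f : ℝ → ℝ)
    (y : X → ℝ) (fstar : ℝ → ℝ)
    (hfstar : ∀ t, IsLUB {v : ℝ | ∃ s : ℝ, 0 ≤ s ∧ v = s * t - f s} (fstar t)) :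
    ∀ p : X → ℝ, (∀ x, 0 ≤ p x) → (∑ x, p x = 1) →
      (∑ x, p x * y x) - (∑ x, q x * f (p x / q x)) ≤ ∑ x, q x * fstar (y x) := by
  intro p hp _
  rw [← sum_sub_distrib]
  exact sum_le_sum fun x _ =>
    sub_perspective_le_mul_of_mem_upperBounds (hfstar (y x)).1 (hq_pos x) (hp x)

/-- Weak duality for f-divergence regularized linear objectives:
for any probability distribution p on a finite set X,
∑_x p(x)y(x) - D_f(p‖q) ≤ ∑_x q(x) f⋆(y(x)), where f⋆ is the conjugate of f
over the nonnegative reals. -/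
theorem stmt_7 {X : Type*} [Fintype X] (q : X → ℝ)
    (hq_pos : ∀ x, 0 < q x) (hq_sum : ∑ x, q x = 1)
    (f : ℝ → ℝ) (hf_convex : ConvexOn ℝ (Set.Ici 0) f) (hf_one : f 1 = 0)
    (y : X → ℝ) (fstar : ℝ → ℝ)
    (hfstar : ∀ t, IsLUB {v : ℝ | ∃ s : ℝ, 0 ≤ s ∧ v = s * t - f s} (fstar t)) :
    ∀ p : X → ℝ, (∀ x, 0 ≤ p x) → (∑ x, p x = 1) →
      (∑ x, p x * y x) - (∑ x, q x * f (p x / q x)) ≤ ∑ x, q x * fstar (y x) :=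
  stmt_7_general q hq_pos f y fstar hfstar
end

section
/- (Performance difference lemma, finite MDP.) Consider a finite MDP with state space S, action space A, reward r : S × A → ℝ, transition kernel T, discount γ ∈ [0,1), and initial distribution μ₀. For any two stationary policies π, π', V^{π'}(μ₀) - V^{π}(μ₀) = (1/(1-γ)) ∑_{s} d^{π'}(s) ∑_a π'(a|s) A^{π}(s,a), where d^{π'} is the normalized discounted state occupancy of π' starting from μ₀, A^π(s,a) = Q^π(s,a) - V^π(s), and V^π(μ₀) = E_{s₀∼μ₀}[V^π(s₀)]. -/
/-!
Let `P` be the state kernel of `π'` and `Δ = V^{π'} - V^π`. The Bellman equation of `π'` turns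
the `π'`-average of the advantage of `π` into `(I - γP)Δ`, and the flow equation says
`d'ᵀ(I - γP) = (1 - γ)μ₀ᵀ`; so weighting the advantage by `d'` gives `(1 - γ) μ₀ᵀΔ`.
-/

open Finset Matrix

namespace MDP

variable {S A R : Type*} [Fintype S] [Fintype A] [CommRing R]

def stateKernel (π : S → A → R) (T : S → A → S → R) : Matrix S S R :=
  Matrix.of fun s s' => ∑ a, π s a * T s a s'

def expectedReward (π : S → A → R) (r : S → A → R) : S → R :=
  fun s => ∑ a, π s a * r s a

theorem sum_policy_mul_qValue (π : S → A → R) (r : S → A → R) (T : S → A → S → R)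
    (γ : R) (V : S → R) (s : S) :
    ∑ a, π s a * (r s a + γ * ∑ s', T s a s' * V s')
      = expectedReward π r s + γ * (stateKernel π T *ᵥ V) s := by
  simp only [expectedReward, stateKernel, mulVec, dotProduct, of_apply, mul_add,
    sum_add_distrib, mul_sum, sum_mul]
  rw [sum_comm (γ := A)]
  congr 1
  exact sum_congr rfl fun _ _ => sum_congr rfl fun _ _ => by ring

theorem sum_policy_mul_advantage (π : S → A → R) (r : S → A → R) (T : S → A → S → R)
    (hπ : ∀ s, ∑ a, π s a = 1) (γ : R) (V : S → R) (s : S) :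
    ∑ a, π s a * ((r s a + γ * ∑ s', T s a s' * V s') - V s)
      = expectedReward π r s + γ * (stateKernel π T *ᵥ V) s - V s := by
  simp only [mul_sub, sum_sub_distrib, ← sum_mul, hπ, one_mul, sum_policy_mul_qValue]

theorem sum_occupancy_flow (π : S → A → R) (T : S → A → S → R) (d : S → R) (s : S) :
    ∑ st, ∑ a, d st * π st a * T st a s = (d ᵥ* stateKernel π T) s := by
  simp only [vecMul, dotProduct, stateKernel, of_apply, mul_sum, mul_assoc]

theorem bellman_residual_eq {P : Matrix S S R} {rπ V' : S → R} {γ : R}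
    (hV' : V' = rπ + γ • (P *ᵥ V')) (V : S → R) :
    rπ + γ • (P *ᵥ V) - V = (V' - V) - γ • (P *ᵥ (V' - V)) := by
  conv_rhs => rw [mulVec_sub, smul_sub]; enter [1, 1]; rw [hV']
  abel

theorem dotProduct_sub_smul_mulVec_of_flow {P : Matrix S S R} {d μ : S → R} {c γ : R}
    (hd : d = c • μ + γ • (d ᵥ* P)) (Δ : S → R) :
    d ⬝ᵥ (Δ - γ • (P *ᵥ Δ)) = c * (μ ⬝ᵥ Δ) := by
  have hflow : d - γ • (d ᵥ* P) = c • μ := by rw [sub_eq_iff_eq_add]; exact hd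
  rw [dotProduct_sub, dotProduct_smul, dotProduct_mulVec, ← smul_dotProduct,
    ← sub_dotProduct, hflow, smul_dotProduct, smul_eq_mul]

theorem dotProduct_advantage_eq {P : Matrix S S R} {rπ V' d μ : S → R} {c γ : R}
    (hV' : V' = rπ + γ • (P *ᵥ V')) (hd : d = c • μ + γ • (d ᵥ* P)) (V : S → R) :
    d ⬝ᵥ (rπ + γ • (P *ᵥ V) - V) = c * (μ ⬝ᵥ (V' - V)) := by
  rw [bellman_residual_eq hV', dotProduct_sub_smul_mulVec_of_flow hd]

end MDP

open MDP in
theorem stmt_9_general {S A : Type*} [Fintype S] [Fintype A]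
    (r : S → A → ℝ) (T : S → A → S → ℝ)
    (γ : ℝ) (hγ1 : γ < 1)
    (μ₀ : S → ℝ)
    (π' : S → A → ℝ)
    (hπ'_sum : ∀ s, ∑ a, π' s a = 1)
    (Vπ Vπ' : S → ℝ)
    (hVπ' : ∀ s, Vπ' s = ∑ a, π' s a * (r s a + γ * ∑ s', T s a s' * Vπ' s'))
    (d' : S → ℝ)
    (hd'_flow : ∀ s, d' s
      = (1 - γ) * μ₀ s + γ * ∑ st, ∑ aa, d' st * π' st aa * T st aa s) :
    (∑ s, μ₀ s * Vπ' s) - (∑ s, μ₀ s * Vπ s)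
      = (1 / (1 - γ)) * ∑ s, d' s *
          ∑ a, π' s a * ((r s a + γ * ∑ s', T s a s' * Vπ s') - Vπ s) := by
  have hbellman : Vπ' = expectedReward π' r + γ • (stateKernel π' T *ᵥ Vπ') := by
    ext s; simp [hVπ' s, sum_policy_mul_qValue]
  have hflow : d' = (1 - γ) • μ₀ + γ • (d' ᵥ* stateKernel π' T) := by
    ext s; simp [hd'_flow s, sum_occupancy_flow]
  have hadv : ∑ s, d' s * ∑ a, π' s a * ((r s a + γ * ∑ s', T s a s' * Vπ s') - Vπ s)
      = d' ⬝ᵥ (expectedReward π' r + γ • (stateKernel π' T *ᵥ Vπ) - Vπ) := by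
    simp [dotProduct, sum_policy_mul_advantage π' r T hπ'_sum]
  have hγ : (1 : ℝ) - γ ≠ 0 := by linarith
  change μ₀ ⬝ᵥ Vπ' - μ₀ ⬝ᵥ Vπ = _
  rw [hadv, dotProduct_advantage_eq hbellman hflow, ← dotProduct_sub, one_div,
    inv_mul_cancel_left₀ hγ]

/-- Performance difference lemma, finite MDP:
V^{π'}(μ₀) - V^{π}(μ₀) = (1/(1-γ)) ∑_s d^{π'}(s) ∑_a π'(a|s) A^{π}(s,a),
where V^π, V^{π'} are characterized by their Bellman fixed-point equations and
d^{π'} by the Bellman flow equation for the normalized discounted occupancy. -/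
theorem stmt_9 {S A : Type*} [Fintype S] [Fintype A]
    (r : S → A → ℝ) (T : S → A → S → ℝ)
    (hT_nonneg : ∀ s a s', 0 ≤ T s a s') (hT_sum : ∀ s a, ∑ s', T s a s' = 1)
    (γ : ℝ) (hγ0 : 0 ≤ γ) (hγ1 : γ < 1)
    (μ₀ : S → ℝ) (hμ₀_nonneg : ∀ s, 0 ≤ μ₀ s) (hμ₀_sum : ∑ s, μ₀ s = 1)
    (π π' : S → A → ℝ)
    (hπ_nonneg : ∀ s a, 0 ≤ π s a) (hπ_sum : ∀ s, ∑ a, π s a = 1)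
    (hπ'_nonneg : ∀ s a, 0 ≤ π' s a) (hπ'_sum : ∀ s, ∑ a, π' s a = 1)
    (Vπ Vπ' : S → ℝ)
    (hVπ : ∀ s, Vπ s = ∑ a, π s a * (r s a + γ * ∑ s', T s a s' * Vπ s'))
    (hVπ' : ∀ s, Vπ' s = ∑ a, π' s a * (r s a + γ * ∑ s', T s a s' * Vπ' s'))
    (d' : S → ℝ) (hd'_nonneg : ∀ s, 0 ≤ d' s)
    (hd'_flow : ∀ s, d' s
      = (1 - γ) * μ₀ s + γ * ∑ st, ∑ aa, d' st * π' st aa * T st aa s) :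
    (∑ s, μ₀ s * Vπ' s) - (∑ s, μ₀ s * Vπ s)
      = (1 / (1 - γ)) * ∑ s, d' s *
          ∑ a, π' s a * ((r s a + γ * ∑ s', T s a s' * Vπ s') - Vπ s) :=
  stmt_9_general r T γ hγ1 μ₀ π' hπ'_sum Vπ Vπ' hVπ' d' hd'_flow
end

section
/- In a finite discounted MDP with rewards bounded by R_max, for any two stationary policies π, π': |V^{π'}(μ₀) - V^{π}(μ₀)| ≤ (R_max/(1-γ)²) · ∑_s d^{π'}(s) ‖π'(·|s) - π(·|s)‖₁, where ‖·‖₁ is the total variation (L1) distance over actions. -/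
/-!
Performance difference lemma: the one-step Bellman differences
`g s = ∑ a, (π' s a - π s a) * Q^π s a` satisfy
`V^{π'} - V^π = g + γ P^{π'} (V^{π'} - V^π)`, and pairing this with the flow equation of the
occupancy `d'` gives `(1 - γ) (V^{π'}(μ₀) - V^π(μ₀)) = ∑ s, d' s * g s`. Since `|Q^π| ≤ Rmax / (1 - γ)`,
each `|g s|` is at most `Rmax / (1 - γ)` times the `L¹` distance of the two policies at `s`.
-/

open Finset

section WeightedSums

variable {ι : Type*} {s : Finset ι} {x y : ι → ℝ} {M : ℝ}

theorem abs_sum_mul_le_of_abs_le (hy : ∀ i ∈ s, |y i| ≤ M) :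
    |∑ i ∈ s, x i * y i| ≤ M * ∑ i ∈ s, |x i| := by
  rw [mul_sum]
  refine (abs_sum_le_sum_abs _ _).trans (sum_le_sum fun i hi => ?_)
  rw [abs_mul, mul_comm M]
  exact mul_le_mul_of_nonneg_left (hy i hi) (abs_nonneg _)

theorem abs_sum_mul_le_of_sum_eq_one (hx0 : ∀ i ∈ s, 0 ≤ x i) (hx1 : ∑ i ∈ s, x i = 1)
    (hy : ∀ i ∈ s, |y i| ≤ M) : |∑ i ∈ s, x i * y i| ≤ M := by
  have h := abs_sum_mul_le_of_abs_le (x := x) hy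
  rwa [sum_congr rfl fun i hi => abs_of_nonneg (hx0 i hi), hx1, mul_one] at h

end WeightedSums

section MDP

variable {S A : Type*} [Fintype S]
  {r : S → A → ℝ} {T : S → A → S → ℝ} {γ Rmax : ℝ} {π π' : S → A → ℝ}

variable (r T γ) in
def qValue (V : S → ℝ) (s : S) (a : A) : ℝ := r s a + γ * ∑ s', T s a s' * V s'

theorem abs_qValue_le {V : S → ℝ} {M : ℝ} (hR : ∀ s a, |r s a| ≤ Rmax)
    (hT_nonneg : ∀ s a s', 0 ≤ T s a s') (hT_sum : ∀ s a, ∑ s', T s a s' = 1) (hγ0 : 0 ≤ γ)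
    (hV : ∀ s, |V s| ≤ M) (s : S) (a : A) : |qValue r T γ V s a| ≤ Rmax + γ * M := by
  have hTV : |∑ s', T s a s' * V s'| ≤ M :=
    abs_sum_mul_le_of_sum_eq_one (fun s' _ => hT_nonneg s a s') (hT_sum s a) fun s' _ => hV s'
  calc |qValue r T γ V s a| ≤ |r s a| + |γ * ∑ s', T s a s' * V s'| := abs_add_le _ _
    _ = |r s a| + γ * |∑ s', T s a s' * V s'| := by rw [abs_mul, abs_of_nonneg hγ0]
    _ ≤ Rmax + γ * M := add_le_add (hR s a) (mul_le_mul_of_nonneg_left hTV hγ0)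

variable [Fintype A]

variable (T) in
def stateKernel (π : S → A → ℝ) (s s' : S) : ℝ := ∑ a, π s a * T s a s'

theorem sum_mul_stateKernel (d : S → ℝ) (s : S) :
    ∑ st, d st * stateKernel T π st s = ∑ st, ∑ a, d st * π st a * T st a s := by
  simp only [stateKernel, mul_sum, mul_assoc]

section Bellman

variable {V : S → ℝ} (hR : ∀ s a, |r s a| ≤ Rmax)
  (hT_nonneg : ∀ s a s', 0 ≤ T s a s') (hT_sum : ∀ s a, ∑ s', T s a s' = 1)
  (hγ0 : 0 ≤ γ) (hγ1 : γ < 1) (hπ_nonneg : ∀ s a, 0 ≤ π s a) (hπ_sum : ∀ s, ∑ a, π s a = 1)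
  (hV : ∀ s, V s = ∑ a, π s a * qValue r T γ V s a)
include hR hT_nonneg hT_sum hγ0 hγ1 hπ_nonneg hπ_sum hV

theorem abs_le_of_bellman (s : S) : |V s| ≤ Rmax / (1 - γ) := by
  have : Nonempty S := ⟨s⟩
  obtain ⟨s₀, hs₀⟩ := Finite.exists_max fun s => |V s|
  have hstep : |V s₀| ≤ Rmax + γ * |V s₀| := by
    conv_lhs => rw [hV s₀]
    exact abs_sum_mul_le_of_sum_eq_one (fun a _ => hπ_nonneg s₀ a) (hπ_sum s₀)
      fun a _ => abs_qValue_le hR hT_nonneg hT_sum hγ0 hs₀ s₀ a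
  refine (hs₀ s).trans ?_
  rw [le_div_iff₀ (by linarith)]
  linarith

theorem abs_qValue_le_of_bellman (s : S) (a : A) : |qValue r T γ V s a| ≤ Rmax / (1 - γ) := by
  have hγ : 1 - γ ≠ 0 := by linarith
  calc |qValue r T γ V s a| ≤ Rmax + γ * (Rmax / (1 - γ)) :=
        abs_qValue_le hR hT_nonneg hT_sum hγ0
          (abs_le_of_bellman hR hT_nonneg hT_sum hγ0 hγ1 hπ_nonneg hπ_sum hV) s a
    _ = Rmax / (1 - γ) := by field_simp; ring

end Bellman

theorem bellman_sub {V V' : S → ℝ} (hV : ∀ s, V s = ∑ a, π s a * qValue r T γ V s a)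
    (hV' : ∀ s, V' s = ∑ a, π' s a * qValue r T γ V' s a) (s : S) :
    V' s - V s = ∑ a, (π' s a - π s a) * qValue r T γ V s a
      + γ * ∑ s', stateKernel T π' s s' * (V' s' - V s') := by
  have hkernel : ∑ s', stateKernel T π' s s' * (V' s' - V s')
      = ∑ a, π' s a * ∑ s', T s a s' * (V' s' - V s') := by
    simp only [stateKernel, sum_mul, mul_sum, mul_assoc]
    exact sum_comm
  rw [hkernel, hV s, hV' s, mul_sum, ← sum_sub_distrib, ← sum_add_distrib]
  refine sum_congr rfl fun a _ => ?_
  simp only [qValue, mul_sub, sum_sub_distrib]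
  ring

end MDP

theorem one_sub_mul_sum_eq_sum_mul_of_flow {S : Type*} [Fintype S] {P : S → S → ℝ} {γ : ℝ}
    {μ d f g : S → ℝ} (hf : ∀ s, f s = g s + γ * ∑ s', P s s' * f s')
    (hd : ∀ s, d s = (1 - γ) * μ s + γ * ∑ s', d s' * P s' s) :
    (1 - γ) * ∑ s, μ s * f s = ∑ s, d s * g s := by
  have hswap : ∑ s, d s * ∑ s', P s s' * f s' = ∑ s', (∑ s, d s * P s s') * f s' := by
    simp only [mul_sum, sum_mul, mul_assoc]
    exact sum_comm
  have hg : ∑ s, d s * f s = ∑ s, d s * g s + γ * ∑ s, d s * ∑ s', P s s' * f s' := by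
    rw [mul_sum, ← sum_add_distrib]
    exact sum_congr rfl fun s _ => by rw [hf s]; ring
  have hμ : ∑ s, d s * f s = (1 - γ) * ∑ s, μ s * f s + γ * ∑ s', (∑ s, d s * P s s') * f s' := by
    rw [mul_sum, mul_sum, ← sum_add_distrib]
    exact sum_congr rfl fun s _ => by rw [hd s]; ring
  rw [hswap] at hg
  linarith

theorem stmt_10_general {S A : Type*} [Fintype S] [Fintype A]
    (r : S → A → ℝ) (Rmax : ℝ) (hR : ∀ s a, |r s a| ≤ Rmax)
    (T : S → A → S → ℝ)
    (hT_nonneg : ∀ s a s', 0 ≤ T s a s') (hT_sum : ∀ s a, ∑ s', T s a s' = 1)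
    (γ : ℝ) (hγ0 : 0 ≤ γ) (hγ1 : γ < 1)
    (μ₀ : S → ℝ)
    (π π' : S → A → ℝ)
    (hπ_nonneg : ∀ s a, 0 ≤ π s a) (hπ_sum : ∀ s, ∑ a, π s a = 1)
    (Vπ Vπ' : S → ℝ)
    (hVπ : ∀ s, Vπ s = ∑ a, π s a * (r s a + γ * ∑ s', T s a s' * Vπ s'))
    (hVπ' : ∀ s, Vπ' s = ∑ a, π' s a * (r s a + γ * ∑ s', T s a s' * Vπ' s'))
    (d' : S → ℝ) (hd'_nonneg : ∀ s, 0 ≤ d' s)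
    (hd'_flow : ∀ s, d' s
      = (1 - γ) * μ₀ s + γ * ∑ st, ∑ aa, d' st * π' st aa * T st aa s) :
    |(∑ s, μ₀ s * Vπ' s) - (∑ s, μ₀ s * Vπ s)|
      ≤ (Rmax / (1 - γ)^2) * ∑ s, d' s * ∑ a, |π' s a - π s a| := by
  have hγ : 0 < 1 - γ := by linarith
  have hpd : (1 - γ) * ∑ s, μ₀ s * (Vπ' s - Vπ s)
      = ∑ s, d' s * ∑ a, (π' s a - π s a) * qValue r T γ Vπ s a :=
    one_sub_mul_sum_eq_sum_mul_of_flow (bellman_sub hVπ hVπ')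
      fun s => by rw [hd'_flow s, sum_mul_stateKernel]
  have hgap (s : S) : |∑ a, (π' s a - π s a) * qValue r T γ Vπ s a|
      ≤ Rmax / (1 - γ) * ∑ a, |π' s a - π s a| :=
    abs_sum_mul_le_of_abs_le fun a _ =>
      abs_qValue_le_of_bellman hR hT_nonneg hT_sum hγ0 hγ1 hπ_nonneg hπ_sum hVπ s a
  have hbound : (1 - γ) * |∑ s, μ₀ s * (Vπ' s - Vπ s)|
      ≤ Rmax / (1 - γ) * ∑ s, d' s * ∑ a, |π' s a - π s a| := by
    rw [← abs_of_pos hγ, ← abs_mul, hpd, mul_sum, abs_of_pos hγ]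
    refine (abs_sum_le_sum_abs _ _).trans (sum_le_sum fun s _ => ?_)
    rw [abs_mul, abs_of_nonneg (hd'_nonneg s), mul_left_comm]
    exact mul_le_mul_of_nonneg_left (hgap s) (hd'_nonneg s)
  rw [← sum_sub_distrib, sq, ← div_div, div_mul_eq_mul_div, le_div_iff₀ hγ]
  simpa only [mul_sub, mul_comm (1 - γ)] using hbound

/-- In a finite discounted MDP with rewards bounded by R_max,
|V^{π'}(μ₀) - V^{π}(μ₀)| ≤ (R_max/(1-γ)²) · ∑_s d^{π'}(s) ‖π'(·|s) - π(·|s)‖₁. -/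
theorem stmt_10 {S A : Type*} [Fintype S] [Fintype A]
    (r : S → A → ℝ) (Rmax : ℝ) (hR : ∀ s a, |r s a| ≤ Rmax)
    (T : S → A → S → ℝ)
    (hT_nonneg : ∀ s a s', 0 ≤ T s a s') (hT_sum : ∀ s a, ∑ s', T s a s' = 1)
    (γ : ℝ) (hγ0 : 0 ≤ γ) (hγ1 : γ < 1)
    (μ₀ : S → ℝ) (hμ₀_nonneg : ∀ s, 0 ≤ μ₀ s) (hμ₀_sum : ∑ s, μ₀ s = 1)
    (π π' : S → A → ℝ)
    (hπ_nonneg : ∀ s a, 0 ≤ π s a) (hπ_sum : ∀ s, ∑ a, π s a = 1)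
    (hπ'_nonneg : ∀ s a, 0 ≤ π' s a) (hπ'_sum : ∀ s, ∑ a, π' s a = 1)
    (Vπ Vπ' : S → ℝ)
    (hVπ : ∀ s, Vπ s = ∑ a, π s a * (r s a + γ * ∑ s', T s a s' * Vπ s'))
    (hVπ' : ∀ s, Vπ' s = ∑ a, π' s a * (r s a + γ * ∑ s', T s a s' * Vπ' s'))
    (d' : S → ℝ) (hd'_nonneg : ∀ s, 0 ≤ d' s)
    (hd'_flow : ∀ s, d' s
      = (1 - γ) * μ₀ s + γ * ∑ st, ∑ aa, d' st * π' st aa * T st aa s) :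
    |(∑ s, μ₀ s * Vπ' s) - (∑ s, μ₀ s * Vπ s)|
      ≤ (Rmax / (1 - γ)^2) * ∑ s, d' s * ∑ a, |π' s a - π s a| :=
  stmt_10_general r Rmax hR T hT_nonneg hT_sum γ hγ0 hγ1 μ₀ π π' hπ_nonneg hπ_sum Vπ Vπ' hVπ hVπ' d'
    hd'_nonneg hd'_flow
end

section
/- For a finite MDP, the Lagrangian dual of the f-divergence-regularized occupancy optimization max_{d ≥ 0, Bellman-flow-feasible} [∑_{s,a} d(s,a) R(s) - D_f(d ‖ d^O)] is min_V (1-γ) ∑_s μ₀(s) V(s) + ∑_{s,a} d^O(s,a) f⋆(R(s) + γ (TV)(s,a) - V(s)), where (TV)(s,a) = ∑_{s'} T(s'|s,a) V(s'), f⋆ is the Fenchel conjugate of f over [0,∞), and D_f(d‖d^O) = ∑_{s,a} d^O(s,a) f(d(s,a)/d^O(s,a)). Weak duality holds: the primal optimum is at most the dual value for every V. -/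
open Finset

/-! Pair the Bellman flow constraint with `V`: the terms `γ · TV - V` weighted by `d` telescope to
`-(1 - γ) ⟨μ₀, V⟩`, so the primal objective equals `⟨d, R + γ TV - V⟩ - D_f(d ‖ d^O) + (1 - γ) ⟨μ₀, V⟩`.
Each term `d y - d^O f(d / d^O)` of the first part is at most `d^O f⋆(y)` by the Fenchel–Young
inequality applied at the ratio `d / d^O ≥ 0`. -/

theorem fenchel_young_perspective {f : ℝ → ℝ} {t c p q : ℝ}
    (hc : IsLUB {v : ℝ | ∃ x : ℝ, 0 ≤ x ∧ v = x * t - f x} c) (hp : 0 < p) (hq : 0 ≤ q) :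
    q * t - p * f (q / p) ≤ p * c := by
  have hle : q / p * t - f (q / p) ≤ c := hc.1 ⟨q / p, div_nonneg hq hp.le, rfl⟩
  calc q * t - p * f (q / p) = p * (q / p * t - f (q / p)) := by field_simp
    _ ≤ p * c := mul_le_mul_of_nonneg_left hle hp.le

theorem sum_mul_eq_of_bellman_flow {S A : Type*} [Fintype S] [Fintype A]
    (T : S → A → S → ℝ) (μ₀ : S → ℝ) (γ : ℝ) (d : S → A → ℝ)
    (hflow : ∀ s, ∑ a, d s a = (1 - γ) * μ₀ s + γ * ∑ st, ∑ aa, T st aa s * d st aa)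
    (V : S → ℝ) :
    ∑ s, (∑ a, d s a) * V s
      = (1 - γ) * ∑ s, μ₀ s * V s + γ * ∑ s, ∑ a, d s a * ∑ s', T s a s' * V s' := by
  have hswap : ∑ s', (∑ s, ∑ a, T s a s' * d s a) * V s'
      = ∑ s, ∑ a, d s a * ∑ s', T s a s' * V s' := by
    simp only [sum_mul, mul_sum]
    rw [sum_comm]
    refine sum_congr rfl fun s _ => ?_
    rw [sum_comm]
    exact sum_congr rfl fun a _ => sum_congr rfl fun s' _ => by ring
  simp only [hflow, add_mul, sum_add_distrib, mul_assoc, ← mul_sum, hswap]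

theorem stmt_16_general {S A : Type*} [Fintype S] [Fintype A]
    (T : S → A → S → ℝ)
    (μ₀ : S → ℝ)
    (γ : ℝ)
    (dO : S → A → ℝ) (hdO_pos : ∀ s a, 0 < dO s a)
    (R : S → ℝ)
    (f : ℝ → ℝ)
    (fstar : ℝ → ℝ)
    (hfstar : ∀ t, IsLUB {v : ℝ | ∃ x : ℝ, 0 ≤ x ∧ v = x * t - f x} (fstar t)) :
    ∀ d : S → A → ℝ, (∀ s a, 0 ≤ d s a) →
      (∀ s, ∑ a, d s a
        = (1 - γ) * μ₀ s + γ * ∑ st, ∑ aa, T st aa s * d st aa) →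
      ∀ V : S → ℝ,
        (∑ s, ∑ a, d s a * R s) - (∑ s, ∑ a, dO s a * f (d s a / dO s a))
          ≤ (1 - γ) * (∑ s, μ₀ s * V s)
            + ∑ s, ∑ a, dO s a * fstar (R s + γ * (∑ s', T s a s' * V s') - V s) := by
  intro d hd hflow V
  set y : S → A → ℝ := fun s a => R s + γ * (∑ s', T s a s' * V s') - V s
  have hpaired : ∑ s, ∑ a, d s a * y s a
      = ∑ s, ∑ a, d s a * R s + γ * ∑ s, ∑ a, d s a * ∑ s', T s a s' * V s'
        - ∑ s, (∑ a, d s a) * V s := by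
    simp only [y, mul_add, mul_sub, sum_add_distrib, sum_sub_distrib, mul_sum, sum_mul]
    simp only [mul_left_comm γ]
  have hfenchel : ∑ s, ∑ a, (d s a * y s a - dO s a * f (d s a / dO s a))
      ≤ ∑ s, ∑ a, dO s a * fstar (y s a) :=
    sum_le_sum fun s _ => sum_le_sum fun a _ =>
      fenchel_young_perspective (hfstar _) (hdO_pos s a) (hd s a)
  simp only [sum_sub_distrib] at hfenchel
  linarith [sum_mul_eq_of_bellman_flow T μ₀ γ d hflow V]

/-- weak Lagrangian duality for the f-divergence regularized
occupancy optimization: for every Bellman-flow-feasible nonnegative d and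
every dual variable V,
∑ d·R - D_f(d‖d^O) ≤ (1-γ)∑_s μ₀(s)V(s) + ∑_{s,a} d^O(s,a) f⋆(R(s) + γ(TV)(s,a) - V(s)). -/
theorem stmt_16 {S A : Type*} [Fintype S] [Fintype A]
    (T : S → A → S → ℝ)
    (hT_nonneg : ∀ s a s', 0 ≤ T s a s') (hT_sum : ∀ s a, ∑ s', T s a s' = 1)
    (μ₀ : S → ℝ) (hμ₀_nonneg : ∀ s, 0 ≤ μ₀ s) (hμ₀_sum : ∑ s, μ₀ s = 1)
    (γ : ℝ) (hγ0 : 0 < γ) (hγ1 : γ < 1)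
    (dO : S → A → ℝ) (hdO_pos : ∀ s a, 0 < dO s a) (hdO_sum : ∑ s, ∑ a, dO s a = 1)
    (R : S → ℝ)
    (f : ℝ → ℝ) (hf_convex : ConvexOn ℝ (Set.Ici 0) f)
    (fstar : ℝ → ℝ)
    (hfstar : ∀ t, IsLUB {v : ℝ | ∃ x : ℝ, 0 ≤ x ∧ v = x * t - f x} (fstar t)) :
    ∀ d : S → A → ℝ, (∀ s a, 0 ≤ d s a) →
      (∀ s, ∑ a, d s a
        = (1 - γ) * μ₀ s + γ * ∑ st, ∑ aa, T st aa s * d st aa) →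
      ∀ V : S → ℝ,
        (∑ s, ∑ a, d s a * R s) - (∑ s, ∑ a, dO s a * f (d s a / dO s a))
          ≤ (1 - γ) * (∑ s, μ₀ s * V s)
            + ∑ s, ∑ a, dO s a * fstar (R s + γ * (∑ s', T s a s' * V s') - V s) :=
  stmt_16_general T μ₀ γ dO hdO_pos R f fstar hfstar
end
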